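/- arXiv:1909.00219 — 5 statements merged into one kernel-verified Lean document; each statement's English description precedes it below -/
import Mathlib

section
/- If a continuous surjection π : X → Y between compact metric spaces semiconjugates homeomorphisms f : X → X and g : Y → Y (i.e. π ∘ f = g ∘ π), and every fiber π⁻¹(y) is finite or, more generally, h_top(f, π⁻¹(y)) = 0 uniformly, with the fibers of uniformly bounded diameter under iteration in the sense of Bowen, then h_top(f) = h_top(g). In particular, for a fiber-preserving homeomorphism of a circle bundle covering a base homeomorphism, the topological entropies of the total map and the base map coincide. -/
/-!
The inequality `h(g) ≤ h(f)` holds for any uniformly continuous factor map. For the converse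
(Bowen), fix `ε > 0` and a small entourage. Zero entropy on a fiber gives, for some time `n y`, a
dynamical cover of `π⁻¹{y}` with at most `e^{ε n y}` cells; by compactness these covers also work
for the preimage of a uniform neighbourhood `ball y W`, with all times bounded by some `N`.
A point whose image `W`-shadows a `g`-orbit segment of length `m` is then located by cutting the
segment into consecutive blocks of lengths `n y` and choosing one cell per block, so at most
`e^{ε (m + N)}` cells are needed per element of a `(W, m)`-cover of `Y`. Hence
`h(f) ≤ h(g) + ε`.
-/

open Dynamics Set Filter Function UniformSpace ExpGrowth
open scoped Uniformity Topology SetRel ENNReal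

lemma EReal.le_of_forall_pos_le_add {a b : EReal} (h : ∀ ε : ℝ, 0 < ε → a ≤ b + ε) : a ≤ b := by
  rw [← add_zero b]
  refine EReal.le_add_of_forall_gt (.inr (by simp)) (.inr (by simp)) fun a' ha' b' hb' => ?_
  obtain ⟨ε, hε, hεb'⟩ := EReal.lt_iff_exists_real_btwn.1 hb'
  exact (h ε (by exact_mod_cast hε)).trans (add_le_add ha'.le hεb'.le)

theorem lebesgue_number_lemma_nhds_finset {α : Type*} [UniformSpace α] {K : Set α}
    (hK : IsCompact K) {U : α → Set α} (hU : ∀ x ∈ K, U x ∈ 𝓝 x) :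
    ∃ t : Finset α, ∃ V ∈ 𝓤 α, SetRel.IsSymm V ∧ ∀ x ∈ K, ∃ y ∈ t, ball x V ⊆ U y := by
  obtain ⟨t, -, ht⟩ := hK.elim_nhds_subcover (fun x => interior (U x))
    fun x hx => interior_mem_nhds.2 (hU x hx)
  obtain ⟨V, ⟨hV, hVs⟩, hVU⟩ := UniformSpace.hasBasis_symmetric.lebesgue_number_lemma hK
    (U := fun y : t => interior (U y)) (fun _ => isOpen_interior)
    (by simpa [iUnion_subtype] using ht)
  refine ⟨t, V, hV, hVs, fun x hx => ?_⟩
  obtain ⟨⟨y, hy⟩, hxy⟩ := hVU x hx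
  exact ⟨y, hy, hxy.trans interior_subset⟩

namespace Dynamics

variable {X Y : Type*} {T : X → X} {F G : Set X} {U V : SetRel X X} {n : ℕ}

lemma mem_dynEntourage_add {x y : X} {k l : ℕ} :
    (x, y) ∈ dynEntourage T U (k + l) ↔
      (x, y) ∈ dynEntourage T U k ∧ (T^[k] x, T^[k] y) ∈ dynEntourage T U l := by
  simp only [mem_dynEntourage, ← iterate_add_apply]
  refine ⟨fun h => ⟨fun j hj => h j (by omega), fun j hj => h (j + k) (by omega)⟩,
    fun ⟨h₁, h₂⟩ j hj => ?_⟩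
  by_cases hjk : j < k
  · exact h₁ j hjk
  · simpa [Nat.sub_add_cancel (not_lt.1 hjk)] using h₂ (j - k) (by omega)

/-- Unlike dynamical covers, covers by small sets can be refined along consecutive time blocks
(see `mem_dynEntourage_add`) without enlarging the entourage. -/
def IsDynSmallCoverOf (T : X → X) (F : Set X) (U : SetRel X X) (n : ℕ)
    (𝒞 : Finset (Set X)) : Prop :=
  F ⊆ ⋃ A ∈ 𝒞, A ∧ ∀ A ∈ 𝒞, A ×ˢ A ⊆ dynEntourage T U n

lemma IsDynSmallCoverOf.coverMincard_le_card {𝒞 : Finset (Set X)}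
    (h : IsDynSmallCoverOf T F U n 𝒞) : coverMincard T F U n ≤ 𝒞.card := by
  rcases F.eq_empty_or_nonempty with rfl | ⟨x₀, -⟩
  · simp [coverMincard_empty]
  classical
  let r : Set X → X := fun A => if hA : A.Nonempty then hA.some else x₀
  refine (IsDynCoverOf.coverMincard_le_card (s := 𝒞.image r) fun x hx => ?_).trans
    (by exact_mod_cast 𝒞.card_image_le)
  obtain ⟨A, hA, hxA⟩ := mem_iUnion₂.1 (h.1 hx)
  have hrA : r A ∈ A := by
    simp only [r, dif_pos (show A.Nonempty from ⟨x, hxA⟩)]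
    exact Nonempty.some_mem _
  exact ⟨r A, by simpa using ⟨A, hA, rfl⟩, h.2 A hA ⟨hxA, hrA⟩⟩

lemma IsDynSmallCoverOf.biUnion [DecidableEq (Set X)] {ι : Type*} {t : Finset ι}
    {F : ι → Set X} {𝒜 : ι → Finset (Set X)} (hG : G ⊆ ⋃ i ∈ t, F i)
    (h : ∀ i ∈ t, IsDynSmallCoverOf T (F i) U n (𝒜 i)) :
    IsDynSmallCoverOf T G U n (t.biUnion 𝒜) := by
  refine ⟨fun x hx => ?_, fun A hA => ?_⟩
  · obtain ⟨i, hi, hxi⟩ := mem_iUnion₂.1 (hG hx)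
    obtain ⟨A, hA, hxA⟩ := mem_iUnion₂.1 ((h i hi).1 hxi)
    exact mem_iUnion₂.2 ⟨A, Finset.mem_biUnion.2 ⟨i, hi, hA⟩, hxA⟩
  · obtain ⟨i, hi, hA⟩ := Finset.mem_biUnion.1 hA
    exact (h i hi).2 A hA

lemma IsDynCoverOf.exists_isDynSmallCoverOf [V.IsSymm] {s : Finset X}
    (h : IsDynCoverOf T F V n s) :
    ∃ 𝒞 : Finset (Set X), IsDynSmallCoverOf T F (V ○ V) n 𝒞 ∧ 𝒞.card ≤ s.card := by
  classical
  refine ⟨s.image fun p => ball p (dynEntourage T V n), ⟨fun x hx => ?_, ?_⟩, Finset.card_image_le⟩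
  · obtain ⟨p, hp, hxp⟩ := h hx
    exact mem_iUnion₂.2 ⟨_, Finset.mem_image_of_mem _ hp, mem_ball_symmetry.2 hxp⟩
  · simp only [Finset.forall_mem_image]
    rintro p - ⟨x, y⟩ ⟨hx, hy⟩
    exact dynEntourage_comp_subset T V V n (SetRel.prodMk_mem_comp (mem_ball_symmetry.1 hx) hy)

lemma exists_isDynCoverOf_card_le_exp_pow [UniformSpace X] (hT : UniformContinuous T)
    (hF : IsCompact F) (hV : V ∈ 𝓤 X) {a : EReal} (ha : coverEntropy T F < a) :
    ∃ n > 0, ∃ s : Finset X, IsDynCoverOf T F V n s ∧ (s.card : ℝ≥0∞) ≤ EReal.exp a ^ n := by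
  have h_lt : coverEntropyEntourage T F V < a :=
    (coverEntropyEntourage_le_coverEntropy T F hV).trans_lt ha
  obtain ⟨n, hn, hn_pos⟩ := ((eventually_le_exp h_lt).and (eventually_gt_atTop 0)).exists
  obtain ⟨s, hs, hs_card⟩ := (coverMincard_finite_iff T F V n).1
    (coverMincard_finite_of_isCompact_uniformContinuous hF hT hV n)
  refine ⟨n, hn_pos, s, hs, ?_⟩
  rw [← EReal.exp_nmul, mul_comm, ← ENat.toENNReal_coe, hs_card]
  exact hn

section Semiconj

variable {g : Y → Y} {π : X → Y} {W : SetRel Y Y} {b : ℝ≥0∞} {N : ℕ} {n : Y → ℕ}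
  {𝒞 : Y → Finset (Set X)}

theorem _root_.Function.Semiconj.exists_isDynSmallCoverOf_preimage_ball (h : Semiconj π T g)
    (hb : 1 ≤ b) (hn : ∀ y, 0 < n y) (hN : ∀ y, n y ≤ N)
    (h𝒞 : ∀ y, IsDynSmallCoverOf T (π ⁻¹' ball y W) U (n y) (𝒞 y))
    (h𝒞_card : ∀ y, ((𝒞 y).card : ℝ≥0∞) ≤ b ^ n y) (m : ℕ) (z : Y) :
    ∃ 𝒜 : Finset (Set X), IsDynSmallCoverOf T (π ⁻¹' ball z (dynEntourage g W m)) U m 𝒜 ∧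
      (𝒜.card : ℝ≥0∞) ≤ b ^ (N + m) := by
  induction m using Nat.strong_induction_on generalizing z with
  | _ m ih =>
  classical
  rcases Nat.eq_zero_or_pos m with rfl | hm
  · exact ⟨{univ}, ⟨by simp, by simp⟩, by simpa using one_le_pow₀ hb⟩
  have h_pre : π ⁻¹' ball z (dynEntourage g W m) ⊆ π ⁻¹' ball z W :=
    preimage_mono (ball_mono ((dynEntourage_antitone g W hm).trans_eq dynEntourage_one) z)
  rcases le_or_gt m (n z) with hmn | hnm
  · exact ⟨𝒞 z, ⟨h_pre.trans (h𝒞 z).1,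
      fun A hA => ((h𝒞 z).2 A hA).trans (dynEntourage_antitone T U hmn)⟩,
      (h𝒞_card z).trans (pow_le_pow_right₀ hb (by have := hN z; omega))⟩
  -- cut off the first block, of length `n z`, and cover the rest from `g^[n z] z` on
  obtain ⟨l, rfl⟩ : ∃ l, m = n z + l := ⟨m - n z, by omega⟩
  obtain ⟨𝒜, h𝒜, h𝒜_card⟩ := ih l (by have := hn z; omega) (g^[n z] z)
  refine ⟨Finset.image₂ (fun C A => C ∩ T^[n z] ⁻¹' A) (𝒞 z) 𝒜, ⟨fun x hx => ?_, ?_⟩, ?_⟩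
  · obtain ⟨C, hC, hxC⟩ := mem_iUnion₂.1 ((h𝒞 z).1 (h_pre hx))
    have hx' : T^[n z] x ∈ π ⁻¹' ball (g^[n z] z) (dynEntourage g W l) := by
      rw [mem_preimage, (h.iterate_right (n z)) x]
      exact (mem_dynEntourage_add.1 hx).2
    obtain ⟨A, hA, hxA⟩ := mem_iUnion₂.1 (h𝒜.1 hx')
    exact mem_iUnion₂.2 ⟨_, Finset.mem_image₂_of_mem hC hA, hxC, hxA⟩
  · simp only [Finset.forall_mem_image₂]
    rintro C hC A hA ⟨x, x'⟩ ⟨hx, hx'⟩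
    exact mem_dynEntourage_add.2 ⟨(h𝒞 z).2 C hC ⟨hx.1, hx'.1⟩, h𝒜.2 A hA ⟨hx.2, hx'.2⟩⟩
  · calc ((Finset.image₂ _ (𝒞 z) 𝒜).card : ℝ≥0∞) ≤ (𝒞 z).card * 𝒜.card := by
          exact_mod_cast Finset.card_image₂_le _ _ _
      _ ≤ b ^ n z * b ^ (N + l) := mul_le_mul' (h𝒞_card z) h𝒜_card
      _ = b ^ (N + (n z + l)) := by rw [← pow_add]; ring_nf

theorem _root_.Function.Semiconj.coverMincard_le_pow_mul [W.IsSymm] (h : Semiconj π T g)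
    (hb : 1 ≤ b) (hn : ∀ y, 0 < n y) (hN : ∀ y, n y ≤ N)
    (h𝒞 : ∀ y, IsDynSmallCoverOf T (π ⁻¹' ball y W) U (n y) (𝒞 y))
    (h𝒞_card : ∀ y, ((𝒞 y).card : ℝ≥0∞) ≤ b ^ n y) (m : ℕ) :
    (coverMincard T univ U m : ℝ≥0∞) ≤ b ^ N * (coverMincard g univ W m * b ^ m) := by
  have hb₀ : ∀ k, b ^ k ≠ 0 := fun k => pow_ne_zero k (zero_lt_one.trans_le hb).ne'
  rcases eq_top_or_lt_top (coverMincard g univ W m) with hg | hg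
  · simp [hg, ENNReal.top_mul (hb₀ m), ENNReal.mul_top (hb₀ N)]
  obtain ⟨t, ht, ht_card⟩ := (coverMincard_finite_iff g univ W m).1 hg
  choose 𝒜 h𝒜 h𝒜_card using h.exists_isDynSmallCoverOf_preimage_ball hb hn hN h𝒞 h𝒞_card m
  classical
  have h_cover : univ ⊆ ⋃ z ∈ t, π ⁻¹' ball z (dynEntourage g W m) := fun x _ => by
    obtain ⟨z, hz, hxz⟩ := ht (mem_univ (π x))
    exact mem_iUnion₂.2 ⟨z, hz, (mem_ball_symmetry (V := dynEntourage g W m)).2 hxz⟩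
  calc (coverMincard T univ U m : ℝ≥0∞) ≤ (t.biUnion 𝒜).card := by
        exact_mod_cast (IsDynSmallCoverOf.biUnion h_cover fun z _ => h𝒜 z).coverMincard_le_card
    _ ≤ ∑ z ∈ t, ((𝒜 z).card : ℝ≥0∞) := by exact_mod_cast Finset.card_biUnion_le
    _ ≤ ∑ _z ∈ t, b ^ (N + m) := Finset.sum_le_sum fun z _ => h𝒜_card z
    _ = b ^ N * (coverMincard g univ W m * b ^ m) := by
        rw [Finset.sum_const, nsmul_eq_mul, ← ht_card, pow_add, ENat.toENNReal_coe]; ring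

theorem _root_.Function.Semiconj.coverEntropyEntourage_le_add_log [W.IsSymm]
    (h : Semiconj π T g) (hb : 1 ≤ b) (hb_top : b ≠ ∞) (hn : ∀ y, 0 < n y) (hN : ∀ y, n y ≤ N)
    (h𝒞 : ∀ y, IsDynSmallCoverOf T (π ⁻¹' ball y W) U (n y) (𝒞 y))
    (h𝒞_card : ∀ y, ((𝒞 y).card : ℝ≥0∞) ≤ b ^ n y) :
    coverEntropyEntourage T univ U ≤ coverEntropyEntourage g univ W + ENNReal.log b := by
  have h_log : expGrowthSup (b ^ ·) = ENNReal.log b := expGrowthSup_pow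
  calc coverEntropyEntourage T univ U
      ≤ expGrowthSup ((coverMincard g univ W · : ℕ → ℝ≥0∞) * (b ^ ·)) :=
        expGrowthSup_le_of_eventually_le (ENNReal.pow_ne_top hb_top) (.of_forall
          (h.coverMincard_le_pow_mul hb hn hN h𝒞 h𝒞_card))
    _ ≤ coverEntropyEntourage g univ W + ENNReal.log b := by
        refine (expGrowthSup_mul_le ?_ ?_).trans_eq (by rw [h_log]; rfl) <;> rw [h_log]
        · exact .inr (by simpa using hb_top)
        · exact .inr (by simpa using (zero_lt_one.trans_le hb).ne')

variable [UniformSpace X] [CompactSpace X] [UniformSpace Y] [CompactSpace Y] [T2Space Y]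

theorem exists_uniform_isDynSmallCoverOf_preimage_ball (hT : Continuous T) (hπ : Continuous π)
    {a : EReal} (h_fiber : ∀ y, coverEntropy T (π ⁻¹' {y}) < a) (hV : V ∈ 𝓤 X) [V.IsSymm]
    (hV_open : IsOpen V) :
    ∃ W ∈ 𝓤 Y, SetRel.IsSymm W ∧ ∃ N : ℕ, ∃ n : Y → ℕ, ∃ 𝒞 : Y → Finset (Set X),
      (∀ y, 0 < n y) ∧ (∀ y, n y ≤ N) ∧
      (∀ y, IsDynSmallCoverOf T (π ⁻¹' ball y W) (V ○ V) (n y) (𝒞 y)) ∧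
      ∀ y, ((𝒞 y).card : ℝ≥0∞) ≤ EReal.exp a ^ n y := by
  choose n hn s hs hs_card using fun y => exists_isDynCoverOf_card_le_exp_pow
    (CompactSpace.uniformContinuous_of_continuous hT) (isClosed_singleton.preimage hπ).isCompact
    hV (h_fiber y)
  have h_nhds : ∀ y, ∃ O ∈ 𝓝 y, IsDynCoverOf T (π ⁻¹' O) V (n y) (s y) := fun y => by
    have h_open : IsOpen (⋃ p ∈ s y, ball p (dynEntourage T V (n y))) :=
      isOpen_biUnion fun p _ => isOpen_ball p (isOpen.dynEntourage hT hV_open _)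
    have h_fib : π ⁻¹' {y} ⊆ ⋃ p ∈ s y, ball p (dynEntourage T V (n y)) := fun x hx => by
      obtain ⟨p, hp, hxp⟩ := hs y hx
      exact mem_iUnion₂.2 ⟨p, hp, (mem_ball_symmetry (V := dynEntourage T V (n y))).2 hxp⟩
    obtain ⟨O, hO, hOG⟩ := mem_comap.1
      ((hπ.isClosedMap.comap_nhds_eq hπ y).symm ▸ h_open.mem_nhdsSet.2 h_fib)
    refine ⟨O, hO, fun x hx => ?_⟩
    obtain ⟨p, hp, hxp⟩ := mem_iUnion₂.1 (hOG hx)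
    exact ⟨p, hp, (mem_ball_symmetry (V := dynEntourage T V (n y))).1 hxp⟩
  choose O hO hOs using h_nhds
  obtain ⟨t, W, hW, hWs, htW⟩ := lebesgue_number_lemma_nhds_finset isCompact_univ fun y _ => hO y
  choose σ hσt hσ using fun y => htW y (mem_univ y)
  choose 𝒞 h𝒞 h𝒞_card using fun y =>
    ((hOs (σ y)).monotone_subset (preimage_mono (hσ y))).exists_isDynSmallCoverOf
  refine ⟨W, hW, hWs, t.sup n, n ∘ σ, 𝒞, fun y => hn _, fun y => Finset.le_sup (hσt y), h𝒞,
    fun y => ?_⟩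
  exact (Nat.cast_le.2 (h𝒞_card y)).trans (hs_card (σ y))

theorem _root_.Function.Semiconj.coverEntropy_univ_le (h : Semiconj π T g) (hT : Continuous T)
    (hπ : Continuous π) (h_fiber : ∀ y, coverEntropy T (π ⁻¹' {y}) ≤ 0) :
    coverEntropy T univ ≤ coverEntropy g univ := by
  refine EReal.le_of_forall_pos_le_add fun ε hε => iSup₂_le fun U hU => ?_
  obtain ⟨V, hV, hV_open, hV_symm, hVU⟩ := comp_open_symm_mem_uniformity_sets hU
  obtain ⟨W, hW, hW_symm, N, n, 𝒞, hn, hN, h𝒞, h𝒞_card⟩ :=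
    exists_uniform_isDynSmallCoverOf_preimage_ball hT hπ (a := ε)
      (fun y => (h_fiber y).trans_lt (by exact_mod_cast hε)) hV hV_open
  calc coverEntropyEntourage T univ U ≤ coverEntropyEntourage T univ (V ○ V) :=
        coverEntropyEntourage_antitone T univ hVU
    _ ≤ coverEntropyEntourage g univ W + ENNReal.log (EReal.exp ε) :=
        h.coverEntropyEntourage_le_add_log (EReal.one_le_exp_iff.2 (by exact_mod_cast hε.le))
          (by simp) hn hN h𝒞 h𝒞_card
    _ ≤ coverEntropy g univ + ε := by
        rw [EReal.log_exp]
        exact add_le_add_left (coverEntropyEntourage_le_coverEntropy g univ hW) _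

end Semiconj

end Dynamics

/-- Ledrappier–Walters / Bowen: a semiconjugacy `π` between homeomorphisms of compact
metric spaces with zero topological (Bowen) entropy on every fiber preserves
topological entropy.  In particular, for a fiber-preserving homeomorphism of a circle
bundle covering a base homeomorphism, the entropies of the total and base maps agree. -/
theorem entropy_of_semiconj_zero_fiber_entropy
    {X Y : Type*} [MetricSpace X] [CompactSpace X] [MetricSpace Y] [CompactSpace Y]
    (f : X ≃ₜ X) (g : Y ≃ₜ Y) (π : X → Y)
    (hπcont : Continuous π) (hπsurj : Function.Surjective π)
    (hsemi : π ∘ f = g ∘ π)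
    (hfiber : ∀ y : Y, coverEntropy (⇑f) (π ⁻¹' {y}) = 0) :
    coverEntropy (⇑f) Set.univ = coverEntropy (⇑g) Set.univ := by
  have h : Semiconj π f g := congr_fun hsemi
  refine le_antisymm (h.coverEntropy_univ_le f.continuous hπcont fun y => (hfiber y).le) ?_
  simpa [hπsurj.range_eq] using coverEntropy_image_le_of_uniformContinuous h
    (CompactSpace.uniformContinuous_of_continuous hπcont) univ
end

section
/- Any two skeletons of a diffeomorphism f have the same cardinality. -/
lemma skeleton_card_le {A : Type*} (R : A → A → Prop)
    (htrans : ∀ p q r : A, R p q → R q r → R p r)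
    (S₁ S₂ : Set A) (hS₂fin : S₂.Finite)
    (hS₁cover : ∀ p : A, ∃ q ∈ S₁, R p q)
    (hS₂cover : ∀ p : A, ∃ q ∈ S₂, R p q)
    (hS₁nohet : ∀ p ∈ S₁, ∀ q ∈ S₁, p ≠ q → ¬ R p q) :
    S₁.ncard ≤ S₂.ncard := by
  choose φ hφmem hφR using hS₂cover
  refine Set.ncard_le_ncard_of_injOn φ (fun p _ => hφmem p) ?_ hS₂fin
  intro p₁ hp₁ p₂ hp₂ heq
  obtain ⟨r, hr, hRr⟩ := hS₁cover (φ p₁)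
  have h₁ : R p₁ r := htrans _ _ _ (hφR p₁) hRr
  have h₂ : R p₂ r := htrans _ _ _ (hφR p₂) (heq ▸ hRr)
  have e₁ : p₁ = r := by
    by_contra h; exact hS₁nohet p₁ hp₁ r hr h h₁
  have e₂ : p₂ = r := by
    by_contra h; exact hS₁nohet p₂ hp₂ r hr h h₂
  rw [e₁, e₂]

/-- Abstract skeleton axioms: `A` is the set of hyperbolic saddles of `f` of stable
index `dim E^{cs}`; `R p q` means `W^u(p)` meets `W^s(Orb q)` transversally.
A finite set `S` is a skeleton if every unstable leaf (in particular, the unstable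
manifold of every saddle) meets `W^s(Orb q)` for some `q ∈ S`, and there are no
heteroclinic intersections between distinct elements of `S`.  The λ-lemma gives
transitivity of `R`.  Conclusion: any two skeletons have the same cardinality. -/
theorem skeletons_have_same_cardinality
    {A : Type*} (R : A → A → Prop)
    -- λ-lemma / inclination lemma: heteroclinic intersection is transitive
    (htrans : ∀ p q r : A, R p q → R q r → R p r)
    (S₁ S₂ : Set A) (hS₁fin : S₁.Finite) (hS₂fin : S₂.Finite)
    -- covering property of the skeletons: the unstable manifold of any saddle meets
    -- the stable manifold of the orbit of some element of the skeleton
    (hS₁cover : ∀ p : A, ∃ q ∈ S₁, R p q)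
    (hS₂cover : ∀ p : A, ∃ q ∈ S₂, R p q)
    -- no heteroclinic intersections within a skeleton
    (hS₁nohet : ∀ p ∈ S₁, ∀ q ∈ S₁, p ≠ q → ¬ R p q)
    (hS₂nohet : ∀ p ∈ S₂, ∀ q ∈ S₂, p ≠ q → ¬ R p q) :
    S₁.ncard = S₂.ncard :=
  le_antisymm
    (skeleton_card_le R htrans S₁ S₂ hS₂fin hS₁cover hS₂cover hS₁nohet)
    (skeleton_card_le R htrans S₂ S₁ hS₁fin hS₂cover hS₁cover hS₂nohet)
end

section
/- Every pre-skeleton contains a minimal pre-skeleton, and a pre-skeleton is minimal (no proper subset is a pre-skeleton) if and only if it is a skeleton. -/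
/-- Abstract pre-skeleton/skeleton setup: `Λ` is the set of unstable leaves, `A` the set
of saddles; `T x p` means the leaf `x` meets `W^s(Orb p)` transversely; `R p q` means
`W^u(p) ∩ W^s(Orb q) ≠ ∅`.  `leaf p` is the unstable leaf through `p`, so that
`T (leaf p) q → R p q`; also `W^u(p)` accumulates on itself, so `T (leaf p) p`.  The
λ-lemma says that if `R p q` then any leaf meeting `W^s(Orb p)` transversely also meets
`W^s(Orb q)` transversely.  Conclusion: every finite pre-skeleton contains a minimal
pre-skeleton, and a pre-skeleton is minimal iff it is a skeleton. -/
theorem preskeleton_minimal_iff_skeleton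
    {Λ A : Type*} (T : Λ → A → Prop) (R : A → A → Prop)
    (leaf : A → Λ)
    (hleaf : ∀ p q : A, T (leaf p) q → R p q)
    (hlam : ∀ p q : A, R p q → ∀ x : Λ, T x p → T x q) :
    -- pre-skeleton: every leaf meets the stable manifold of some element of `S`
    let pre : Set A → Prop := fun S => ∀ x : Λ, ∃ p ∈ S, T x p
    -- skeleton: pre-skeleton with no heteroclinic intersections
    let skel : Set A → Prop :=
      fun S => pre S ∧ ∀ p ∈ S, ∀ q ∈ S, p ≠ q → ¬ R p q
    -- minimal pre-skeleton: no proper subset is a pre-skeleton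
    let minimalPre : Set A → Prop :=
      fun S => pre S ∧ ∀ S' ⊆ S, S' ≠ S → ¬ pre S'
    ∀ S : Set A, S.Finite → pre S →
      ((∃ S' ⊆ S, minimalPre S') ∧ (minimalPre S ↔ skel S)) := by
  intro pre skel minimalPre
  -- key equivalence, for any finite pre-skeleton
  have key : ∀ S : Set A, S.Finite → pre S → (minimalPre S ↔ skel S) := by
    intro S hfin hpre
    constructor
    · rintro ⟨hp, hmin⟩
      refine ⟨hp, ?_⟩
      rintro p hp' q hq' hne hR
      -- S \ {p} is a pre-skeleton, proper subset
      have hpre' : pre (S \ {p}) := by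
        intro x
        obtain ⟨r, hr, hTr⟩ := hp x
        by_cases hrp : r = p
        · exact ⟨q, ⟨hq', fun h => hne (Set.mem_singleton_iff.mp h).symm⟩, hlam p q hR x (hrp ▸ hTr)⟩
        · exact ⟨r, ⟨hr, hrp⟩, hTr⟩
      refine hmin (S \ {p}) Set.diff_subset (fun h => ?_) hpre'
      have : p ∈ S \ {p} := h.symm ▸ hp'
      exact this.2 rfl
    · rintro ⟨hp, hskel⟩
      refine ⟨hp, ?_⟩
      rintro S' hsub hne hpre'
      obtain ⟨p, hpS, hpS'⟩ : ∃ p, p ∈ S ∧ p ∉ S' := by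
        by_contra h
        push_neg at h
        exact hne (Set.Subset.antisymm hsub h)
      obtain ⟨q, hq, hTq⟩ := hpre' (leaf p)
      have hqp : q ≠ p := fun h => hpS' (h ▸ hq)
      exact hskel p hpS q (hsub hq) (Ne.symm hqp) (hleaf p q hTq)
  refine fun S hfin hpre => ⟨?_, key S hfin hpre⟩
  -- existence of a minimal pre-skeleton inside S, by strong induction on ncard
  clear key
  have main : ∀ n : ℕ, ∀ S : Set A, S.Finite → S.ncard ≤ n → pre S →
      ∃ S' ⊆ S, minimalPre S' := by
    intro n
    induction n with
    | zero =>
      intro S hfin hcard hpre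
      refine ⟨S, subset_refl S, hpre, ?_⟩
      rintro S' hsub hne hpre'
      have : S = ∅ := by
        rw [← Set.ncard_eq_zero hfin]; omega
      exact hne (by rw [this] at hsub ⊢; exact Set.subset_eq_empty hsub rfl)
    | succ n ih =>
      intro S hfin hcard hpre
      by_cases h : ∀ S' ⊆ S, S' ≠ S → ¬ pre S'
      · exact ⟨S, subset_refl S, hpre, h⟩
      · push_neg at h
        obtain ⟨S', hsub, hne, hpre'⟩ := h
        have hfin' : S'.Finite := hfin.subset hsub
        have hlt : S'.ncard < S.ncard :=
          Set.ncard_lt_ncard (lt_of_le_of_ne hsub hne) hfin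
        obtain ⟨S'', hsub'', hmin⟩ := ih S' hfin' (by omega) hpre'
        exact ⟨S'', hsub''.trans hsub, hmin⟩
  exact main S.ncard S hfin le_rfl hpre
end

section
/- Crossing is a robust property: with notation as above, if D₂ crosses D₁, then there is ε > 0 such that any graph D₁' of a continuous map φ₁' with ‖φ₁' − φ₁‖_∞ < ε and any image D₂' of a continuous map φ₂' with ‖φ₂' − φ₂‖_∞ < ε (sup distance in [0,1]^d × [0,1]) still satisfy that D₂' crosses D₁', and in particular D₁' ∩ D₂' ≠ ∅. -/
open Set

/-- Crossing is robust: if the image of `φ₂` crosses the graph of `φ₁`, then there is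
`ε > 0` such that for all continuous `ψ₁, ψ₂` uniformly `ε`-close to `φ₁, φ₂`, the image
of `ψ₂` still crosses the graph of `ψ₁`; in particular the two sets intersect. -/
theorem crossing_is_robust
    (d : ℕ)
    (φ₁ : (Fin d → ℝ) → ℝ) (φ₂ : (Fin d → ℝ) → (Fin d → ℝ) × ℝ)
    (cube : Set (Fin d → ℝ)) (hcube : cube = Icc 0 1)
    (hφ₁ : ContinuousOn φ₁ cube) (hφ₂ : ContinuousOn φ₂ cube)
    (hrange₂ : ∀ t ∈ cube, (φ₂ t).1 ∈ cube)
    (habove : ∃ s ∈ cube, φ₁ ((φ₂ s).1) < (φ₂ s).2)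
    (hbelow : ∃ s ∈ cube, (φ₂ s).2 < φ₁ ((φ₂ s).1)) :
    ∃ ε > (0:ℝ),
      ∀ (ψ₁ : (Fin d → ℝ) → ℝ) (ψ₂ : (Fin d → ℝ) → (Fin d → ℝ) × ℝ),
        ContinuousOn ψ₁ cube → ContinuousOn ψ₂ cube →
        (∀ t ∈ cube, |ψ₁ t - φ₁ t| < ε) →
        (∀ t ∈ cube, dist (ψ₂ t) (φ₂ t) < ε) →
        (∀ t ∈ cube, (ψ₂ t).1 ∈ cube) →
        ((∃ s ∈ cube, ψ₁ ((ψ₂ s).1) < (ψ₂ s).2) ∧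
         (∃ s ∈ cube, (ψ₂ s).2 < ψ₁ ((ψ₂ s).1)) ∧
         (((fun t => (t, ψ₁ t)) '' cube) ∩ (ψ₂ '' cube)).Nonempty) := by
  obtain ⟨sa, hsa, ha⟩ := habove
  obtain ⟨sb, hsb, hb⟩ := hbelow
  set δ : ℝ := min ((φ₂ sa).2 - φ₁ ((φ₂ sa).1)) (φ₁ ((φ₂ sb).1) - (φ₂ sb).2) / 3 with hδdef
  have hδ : 0 < δ := by
    apply div_pos (lt_min (by linarith) (by linarith)) (by norm_num)
  have hδa : 3 * δ ≤ (φ₂ sa).2 - φ₁ ((φ₂ sa).1) := by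
    rw [hδdef]; have := min_le_left ((φ₂ sa).2 - φ₁ ((φ₂ sa).1)) (φ₁ ((φ₂ sb).1) - (φ₂ sb).2)
    linarith
  have hδb : 3 * δ ≤ φ₁ ((φ₂ sb).1) - (φ₂ sb).2 := by
    rw [hδdef]; have := min_le_right ((φ₂ sa).2 - φ₁ ((φ₂ sa).1)) (φ₁ ((φ₂ sb).1) - (φ₂ sb).2)
    linarith
  have hcpt : IsCompact cube := by rw [hcube]; exact isCompact_Icc
  have hunif := hcpt.uniformContinuousOn_of_continuous hφ₁
  rw [Metric.uniformContinuousOn_iff] at hunif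
  obtain ⟨η, hη, hφ₁close⟩ := hunif δ hδ
  refine ⟨min η δ, lt_min hη hδ, ?_⟩
  intro ψ₁ ψ₂ hψ₁ hψ₂ h1 h2 hrange
  -- key estimates at a point s
  have key : ∀ s ∈ cube,
      |ψ₁ ((ψ₂ s).1) - φ₁ ((φ₂ s).1)| < 2 * δ ∧ |(ψ₂ s).2 - (φ₂ s).2| < δ := by
    intro s hs
    have hd := h2 s hs
    have hdf : dist (ψ₂ s).1 (φ₂ s).1 < η := by
      have : dist (ψ₂ s).1 (φ₂ s).1 ≤ dist (ψ₂ s) (φ₂ s) := by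
        rw [Prod.dist_eq]; exact le_max_left _ _
      have := this.trans_lt hd
      exact this.trans_le (min_le_left _ _)
    have hds : |(ψ₂ s).2 - (φ₂ s).2| < δ := by
      have : dist (ψ₂ s).2 (φ₂ s).2 ≤ dist (ψ₂ s) (φ₂ s) := by
        rw [Prod.dist_eq]; exact le_max_right _ _
      rw [← Real.dist_eq]
      exact (this.trans_lt hd).trans_le (min_le_right _ _)
    have h1' : |ψ₁ ((ψ₂ s).1) - φ₁ ((ψ₂ s).1)| < δ :=
      ((h1 _ (hrange s hs)).trans_le (min_le_right _ _))
    have h2' : |φ₁ ((ψ₂ s).1) - φ₁ ((φ₂ s).1)| < δ := by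
      rw [← Real.dist_eq]
      exact hφ₁close _ (hrange s hs) _ (hrange₂ s hs) hdf
    constructor
    · calc |ψ₁ ((ψ₂ s).1) - φ₁ ((φ₂ s).1)|
          ≤ |ψ₁ ((ψ₂ s).1) - φ₁ ((ψ₂ s).1)| + |φ₁ ((ψ₂ s).1) - φ₁ ((φ₂ s).1)| := by
            have := abs_sub_abs_le_abs_sub (ψ₁ ((ψ₂ s).1)) (φ₁ ((φ₂ s).1))
            exact abs_sub_le _ _ _
      _ < 2 * δ := by linarith
    · exact hds
  obtain ⟨hka, hka2⟩ := key sa hsa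
  obtain ⟨hkb, hkb2⟩ := key sb hsb
  rw [abs_sub_lt_iff] at hka hka2 hkb hkb2
  have above' : ψ₁ ((ψ₂ sa).1) < (ψ₂ sa).2 := by linarith
  have below' : (ψ₂ sb).2 < ψ₁ ((ψ₂ sb).1) := by linarith
  refine ⟨⟨sa, hsa, above'⟩, ⟨sb, hsb, below'⟩, ?_⟩
  have hconn : IsPreconnected cube := by
    rw [hcube]; exact (convex_Icc _ _).isPreconnected
  have hsnd : ContinuousOn (fun t => (ψ₂ t).2) cube :=
    continuous_snd.comp_continuousOn hψ₂
  have hg : ContinuousOn (fun t => ψ₁ ((ψ₂ t).1)) cube :=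
    hψ₁.comp (continuous_fst.comp_continuousOn hψ₂) hrange
  obtain ⟨x, hx, hfx⟩ := hconn.intermediate_value₂ hsb hsa hsnd hg
    below'.le above'.le
  refine ⟨ψ₂ x, ⟨(ψ₂ x).1, hrange x hx, ?_⟩, mem_image_of_mem _ hx⟩
  exact Prod.ext rfl hfx.symm
end

section
/- Let f be a homeomorphism of a compact metric space such that every pair of 'unstable leaves' can be connected: for any x₁, x₂ there exist n₁, n₂ > 0 and a 'stable leaf' L with L ∩ f^{n₁}(U(x₁)) ≠ ∅ and L ∩ f^{n₂}(U(x₂)) ≠ ∅, where U(x) denotes the unstable set of x, stable leaves satisfy d(f^n(a), f^n(b)) → 0 for a, b on the same stable leaf, and unstable sets satisfy f(U(x)) = U(f(x)) and are contained in any closed invariant u-saturated set containing x. Then f has at most one compact, invariant, u-saturated subset that is minimal with respect to these properties, i.e. any two nonempty compact invariant u-saturated minimal sets coincide. -/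
open Filter Topology

private lemma iter_image_eq {X : Type*} (g : X → X) (K : Set X) (h : g '' K = K) :
    ∀ n : ℕ, g^[n] '' K = K := by
  intro n
  induction n with
  | zero => simp
  | succ n ih =>
    rw [Function.iterate_succ', Set.image_comp, ih, h]

/-- Abstract Hertz–Ures criterium: let `f` be a homeomorphism of a compact metric
space with "unstable sets" `U x` satisfying `f(U x) = U (f x)`, and a "same stable
leaf" relation `s` along which forward orbits are asymptotic.  If any two unstable
sets can be joined by a stable leaf after finitely many forward iterates, then any two
nonempty compact invariant `u`-saturated minimal sets coincide; i.e. there is at most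
one such minimal set. -/
theorem unique_minimal_u_saturated_set
    {X : Type*} [MetricSpace X] [CompactSpace X]
    (f : X ≃ₜ X)
    (U : X → Set X) (s : X → X → Prop)
    -- (i) equivariance of unstable sets
    (hUeq : ∀ x, f '' U x = U (f x))
    -- (iii) points on a common stable leaf are forward asymptotic
    (hs : ∀ a b, s a b →
      Tendsto (fun n : ℕ => dist ((⇑f)^[n] a) ((⇑f)^[n] b)) atTop (𝓝 0))
    -- connecting hypothesis: any two unstable sets are joined by a stable leaf
    (hconn : ∀ x₁ x₂ : X, ∃ n₁ > 0, ∃ n₂ > 0,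
      ∃ a₁ ∈ (⇑f)^[n₁] '' U x₁, ∃ a₂ ∈ (⇑f)^[n₂] '' U x₂, s a₁ a₂) :
    -- `u`-saturated, compact, invariant, minimal sets
    let uSat : Set X → Prop := fun K => ∀ x ∈ K, U x ⊆ K
    let minimalSet : Set X → Prop := fun K =>
      K.Nonempty ∧ IsCompact K ∧ f '' K = K ∧ uSat K ∧
      ∀ K' ⊆ K, K'.Nonempty → IsCompact K' → f '' K' = K' → uSat K' → K' = K
    ∀ K₁ K₂ : Set X, minimalSet K₁ → minimalSet K₂ → K₁ = K₂ := by
  intro uSat minimalSet K₁ K₂ h₁ h₂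
  obtain ⟨⟨x₁, hx₁⟩, hK₁c, hK₁inv, hK₁sat, hK₁min⟩ := h₁
  obtain ⟨⟨x₂, hx₂⟩, hK₂c, hK₂inv, hK₂sat, hK₂min⟩ := h₂
  -- get connecting points
  obtain ⟨n₁, -, n₂, -, a₁, ha₁, a₂, ha₂, hsa⟩ := hconn x₁ x₂
  have ha₁K : a₁ ∈ K₁ := by
    have : a₁ ∈ (⇑f)^[n₁] '' K₁ :=
      Set.image_mono (hK₁sat x₁ hx₁) ha₁
    rwa [iter_image_eq _ _ hK₁inv] at this
  have ha₂K : a₂ ∈ K₂ := by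
    have : a₂ ∈ (⇑f)^[n₂] '' K₂ :=
      Set.image_mono (hK₂sat x₂ hx₂) ha₂
    rwa [iter_image_eq _ _ hK₂inv] at this
  -- iterates stay in the sets
  have hiter₁ : ∀ n : ℕ, (⇑f)^[n] a₁ ∈ K₁ := by
    intro n
    have : (⇑f)^[n] a₁ ∈ (⇑f)^[n] '' K₁ := Set.mem_image_of_mem _ ha₁K
    rwa [iter_image_eq _ _ hK₁inv] at this
  have hiter₂ : ∀ n : ℕ, (⇑f)^[n] a₂ ∈ K₂ := by
    intro n
    have : (⇑f)^[n] a₂ ∈ (⇑f)^[n] '' K₂ := Set.mem_image_of_mem _ ha₂K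
    rwa [iter_image_eq _ _ hK₂inv] at this
  -- extract a convergent subsequence in K₁
  obtain ⟨p, hpK₁, φ, hφ, hlim⟩ :=
    hK₁c.tendsto_subseq (x := fun n : ℕ => (⇑f)^[n] a₁) hiter₁
  have hdist := hs a₁ a₂ hsa
  have hdistφ : Tendsto (fun n : ℕ => dist ((⇑f)^[φ n] a₁) ((⇑f)^[φ n] a₂))
      atTop (𝓝 0) := hdist.comp hφ.tendsto_atTop
  have hlim₂ : Tendsto (fun n : ℕ => (⇑f)^[φ n] a₂) atTop (𝓝 p) := by
    rw [tendsto_iff_dist_tendsto_zero]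
    have hb : Tendsto (fun n : ℕ =>
        dist ((⇑f)^[φ n] a₂) ((⇑f)^[φ n] a₁) + dist ((⇑f)^[φ n] a₁) p)
        atTop (𝓝 0) := by
      have : Tendsto (fun n : ℕ => dist ((⇑f)^[φ n] a₁) p) atTop (𝓝 0) := by
        rw [← tendsto_iff_dist_tendsto_zero]; exact hlim
      simpa using (hdistφ.congr (fun n => dist_comm _ _)).add this
    exact squeeze_zero (fun n => dist_nonneg) (fun n => dist_triangle _ _ _) hb
  have hpK₂ : p ∈ K₂ := hK₂c.isClosed.mem_of_tendsto hlim₂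
    (Eventually.of_forall fun n => hiter₂ (φ n))
  -- K₁ ∩ K₂ is a nonempty compact invariant saturated subset of both
  have hne : (K₁ ∩ K₂).Nonempty := ⟨p, hpK₁, hpK₂⟩
  have hc : IsCompact (K₁ ∩ K₂) := hK₁c.inter_right hK₂c.isClosed
  have hinv : f '' (K₁ ∩ K₂) = K₁ ∩ K₂ := by
    rw [Set.image_inter f.injective, hK₁inv, hK₂inv]
  have hsat : uSat (K₁ ∩ K₂) := fun x hx =>
    Set.subset_inter (hK₁sat x hx.1) (hK₂sat x hx.2)
  have e₁ := hK₁min (K₁ ∩ K₂) Set.inter_subset_left hne hc hinv hsat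
  have e₂ := hK₂min (K₁ ∩ K₂) Set.inter_subset_right hne hc hinv hsat
  exact e₁.symm.trans e₂
end
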